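/- arXiv:2304.07339 — 5 statements merged into one kernel-verified Lean document; each statement's English description precedes it below -/
import Mathlib

section
/- Let d be a squarefree integer with d ≠ 1 and d ≠ -3, and let k be a positive integer. If there exist rational numbers X, Y ∈ ℚ with Y² = X³ - 432·d³·k², then there exist x, y, z in the ring of integers O_K of K = ℚ(√d) with x³ + y³ = k·z³ and x·y·z ≠ 0. -/
/-!
This is the classical map from `Y² = X³ - 432k²` to `x³ + y³ = kz³`, twisted by `√d`: for a
rational point `(X, Y)` of `Y² = X³ - 432d³k²`, the numbers `36kd√d ± Y` and `6X√d` satisfy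
`x³ + y³ = kz³`, and clearing the denominators of `X` and `Y` puts them in `ℤ[√d]`. Since `d` is
squarefree and `d ≠ 1`, `√d` is irrational, so `x, y ≠ 0`. Also `X ≠ 0`, since otherwise `-3d`
would be a rational square, which forces `d = -3`.
-/

theorem Int.eq_one_of_squarefree_of_isSquare {d : ℤ} (hd : Squarefree d) (hsq : IsSquare d) :
    d = 1 := by
  obtain ⟨r, rfl⟩ := hsq
  rcases Int.isUnit_iff.mp (hd r dvd_rfl) with rfl | rfl <;> rfl

theorem Int.eq_of_squarefree_of_isSquare_prime_mul {p d : ℤ} (hp : Prime p) (hd : Squarefree d)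
    (hsq : IsSquare (p * d)) : d = p := by
  obtain ⟨r, hr⟩ := hsq
  obtain ⟨n, rfl⟩ : p ∣ r := hp.dvd_of_dvd_pow (n := 2) ⟨d, by rw [hr]; ring⟩
  have hdn : d = p * (n * n) := mul_left_cancel₀ hp.ne_zero (by rw [hr]; ring)
  rcases Int.isUnit_iff.mp (hd n ⟨p, by rw [hdn]; ring⟩) with rfl | rfl <;> simpa using hdn

theorem ne_zero_of_sq_eq_cube_sub {d : ℤ} {k X Y : ℚ} (hd : Squarefree d) (hd3 : d ≠ -3)
    (hk : k ≠ 0) (h : Y ^ 2 = X ^ 3 - 432 * d ^ 3 * k ^ 2) : X ≠ 0 := by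
  rintro rfl
  have hd0 : (d : ℚ) ≠ 0 := Int.cast_ne_zero.mpr hd.ne_zero
  have hsq : IsSquare (((-3 * d : ℤ)) : ℚ) := ⟨Y / (12 * d * k), by
    field_simp
    push_cast
    linear_combination -h⟩
  exact hd3 (Int.eq_of_squarefree_of_isSquare_prime_mul Int.prime_three.neg hd
    (Rat.isSquare_intCast_iff.mp hsq))

theorem exists_int_point_of_sq_eq_cube_sub {c : ℤ} {X Y : ℚ} (hX : X ≠ 0)
    (h : Y ^ 2 = X ^ 3 - c) : ∃ m a b : ℤ, m ≠ 0 ∧ a ≠ 0 ∧ m * b ^ 2 = a ^ 3 - c * m ^ 3 := by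
  have hXm : X * X.den = X.num := Rat.mul_den_eq_num X
  have hYm : Y * Y.den = Y.num := Rat.mul_den_eq_num Y
  refine ⟨X.den * Y.den, X.num * Y.den, Y.num * X.den, by positivity,
    mul_ne_zero (Rat.num_ne_zero.mpr hX) (by positivity), ?_⟩
  have : ((X.den * Y.den : ℤ) : ℚ) * (Y.num * X.den) ^ 2
      = (X.num * Y.den) ^ 3 - c * (X.den * Y.den) ^ 3 := by
    push_cast
    rw [← hXm, ← hYm]
    linear_combination ((X.den : ℚ) * Y.den) ^ 3 * h
  exact_mod_cast this

theorem cube_add_cube_eq_mul_cube {R : Type*} [CommRing R] {s d k m a b : R} (hs : s ^ 2 = d)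
    (hab : m * b ^ 2 = a ^ 3 - 432 * d ^ 3 * k ^ 2 * m ^ 3) :
    (36 * k * d * m * s + b) ^ 3 + (36 * k * d * m * s - b) ^ 3 = k * (6 * a * s) ^ 3 := by
  linear_combination (216 * k * d * s) * hab +
    (93312 * k ^ 3 * d ^ 3 * m ^ 3 * s - 216 * k * a ^ 3 * s) * hs

theorem intCast_mul_add_ne_zero {K : Type*} [Field K] [CharZero K] {s : K} {d A B : ℤ}
    (hs : s ^ 2 = d) (hd : ¬IsSquare (d : ℚ)) (hA : A ≠ 0) : (A : K) * s + B ≠ 0 := by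
  intro h
  have hK : ((A : ℚ) ^ 2 * d : ℚ) = ((B : ℚ) ^ 2 : ℚ) := by
    exact_mod_cast (by push_cast; linear_combination ((A : K) * s - B) * h - (A : K) ^ 2 * hs :
      ((A : ℚ) ^ 2 * d : K) = ((B : ℚ) ^ 2 : ℚ))
  exact hd ⟨-B / A, by field_simp; linear_combination hK⟩

theorem mem_adjoin_and_isIntegral_of_mem_adjoin_int {L : Type*} [Field L] [CharZero L]
    {s x : L} (hs : IsIntegral ℤ s) (hx : x ∈ Algebra.adjoin ℤ {s}) :
    x ∈ IntermediateField.adjoin ℚ {s} ∧ IsIntegral ℤ x :=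
  ⟨Algebra.adjoin_le (S := (IntermediateField.adjoin ℚ {s}).toSubalgebra.restrictScalars ℤ)
    (Set.singleton_subset_iff.mpr (IntermediateField.mem_adjoin_simple_self ℚ s)) hx,
    adjoin_le_integralClosure hs hx⟩

/-- For a squarefree integer `d` with `d ≠ 1` and `d ≠ -3` and a positive integer `k`,
if there exist rational numbers `X, Y` with `Y² = X³ - 432·d³·k²`, then there exist
`x, y, z` in the ring of integers of `K = ℚ(√d)` (realised as elements of the subfield of
`ℂ` generated by a complex square root `s` of `d` which are integral over `ℤ`) with
`x³ + y³ = k·z³` and `x·y·z ≠ 0`. -/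
theorem rational_point_implies_integral_solution (d : ℤ) (hd : Squarefree d)
    (hd1 : d ≠ 1) (hd3 : d ≠ -3) (k : ℕ) (hk : 0 < k)
    (s : ℂ) (hs : s ^ 2 = (d : ℂ))
    (hpt : ∃ X Y : ℚ, Y ^ 2 = X ^ 3 - 432 * (d : ℚ) ^ 3 * (k : ℚ) ^ 2) :
    ∃ x y z : ℂ, x ∈ IntermediateField.adjoin ℚ {s} ∧
      y ∈ IntermediateField.adjoin ℚ {s} ∧ z ∈ IntermediateField.adjoin ℚ {s} ∧
      IsIntegral ℤ x ∧ IsIntegral ℤ y ∧ IsIntegral ℤ z ∧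
      x ^ 3 + y ^ 3 = (k : ℂ) * z ^ 3 ∧ x * y * z ≠ 0 := by
  obtain ⟨X, Y, hXY⟩ := hpt
  have hX : X ≠ 0 := ne_zero_of_sq_eq_cube_sub hd hd3 (by exact_mod_cast hk.ne') hXY
  obtain ⟨m, a, b, hm, ha, hab⟩ :=
    exists_int_point_of_sq_eq_cube_sub (c := 432 * d ^ 3 * k ^ 2) hX (by push_cast; exact hXY)
  have hdQ : ¬IsSquare (d : ℚ) := fun h ↦
    hd1 (Int.eq_one_of_squarefree_of_isSquare hd (Rat.isSquare_intCast_iff.mp h))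
  have hs0 : s ≠ 0 := by
    rintro rfl
    exact hd.ne_zero (by exact_mod_cast hs.symm.trans (zero_pow two_ne_zero))
  have hsZ : IsIntegral ℤ s := IsIntegral.of_pow two_pos (hs ▸ isIntegral_algebraMap (x := d))
  have hA : (36 * k * d * m : ℤ) ≠ 0 := by have := hd.ne_zero; positivity
  have hsmem : s ∈ Algebra.adjoin ℤ {s} := Algebra.self_mem_adjoin_singleton ℤ s
  obtain ⟨hx, hxZ⟩ := mem_adjoin_and_isIntegral_of_mem_adjoin_int hsZ
    (add_mem (mul_mem (intCast_mem _ (36 * k * d * m)) hsmem) (intCast_mem _ b))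
  obtain ⟨hy, hyZ⟩ := mem_adjoin_and_isIntegral_of_mem_adjoin_int hsZ
    (add_mem (mul_mem (intCast_mem _ (36 * k * d * m)) hsmem) (intCast_mem _ (-b)))
  obtain ⟨hz, hzZ⟩ := mem_adjoin_and_isIntegral_of_mem_adjoin_int hsZ
    (mul_mem (intCast_mem _ (6 * a)) hsmem)
  refine ⟨_, _, _, hx, hy, hz, hxZ, hyZ, hzZ, ?_, ?_⟩
  · push_cast
    exact cube_add_cube_eq_mul_cube hs (by exact_mod_cast hab)
  · refine mul_ne_zero (mul_ne_zero (intCast_mul_add_ne_zero hs hdQ hA)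
      (intCast_mul_add_ne_zero hs hdQ hA)) (mul_ne_zero ?_ hs0)
    exact_mod_cast (by positivity : 6 * a ≠ 0)
end

section
/- Let d be a squarefree integer, and let k be a positive cubefree integer with k ≠ 1. Then there is no element w ∈ K with w³ = k; that is, k is not a cube in ℚ(√d). -/
/-!
A cube root of `k` in `ℚ(√d)` would generate a subextension of degree dividing
`[ℚ(√d) : ℚ] ≤ 2`. But `k` is not a rational cube, since a rational cube root of an integer
is an integer and `k ≠ 1` is cubefree, so `X ^ 3 - k` is irreducible over `ℚ` and any root of it
has degree `3`.
-/

open Polynomial IntermediateField Module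

theorem Rat.pow_ne_natCast_of_forall_prime_pow_not_dvd {m n : ℕ} (hm : m ≠ 0) (hn : n ≠ 1)
    (hfree : ∀ p : ℕ, p.Prime → ¬ p ^ m ∣ n) (b : ℚ) : b ^ m ≠ n := by
  intro hb
  obtain ⟨z, rfl⟩ : ∃ z : ℤ, algebraMap ℤ ℚ z = b :=
    IsIntegrallyClosed.exists_algebraMap_eq_of_isIntegral_pow (Nat.pos_of_ne_zero hm)
      (hb ▸ isIntegral_algebraMap (x := (n : ℤ)))
  have hz : z.natAbs ^ m = n := by
    have : z ^ m = n := by simpa using congrArg Rat.num hb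
    simpa [Int.natAbs_pow] using congrArg Int.natAbs this
  have hz1 : z.natAbs ≠ 1 := by rintro h; simp [h] at hz; omega
  obtain ⟨p, hp, hpz⟩ := Nat.exists_prime_and_dvd hz1
  exact hfree p hp (hz ▸ pow_dvd_pow_of_dvd hpz m)

section PowEqAlgebraMap

variable {F E : Type*} [Field F] [Field E] [Algebra F E] {n : ℕ} {a : F} {x : E}

theorem IsIntegral.of_pow_eq_algebraMap (hn : n ≠ 0) (hx : x ^ n = algebraMap F E a) :
    IsIntegral F x :=
  .of_pow (Nat.pos_of_ne_zero hn) (hx ▸ isIntegral_algebraMap)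

theorem finrank_adjoin_le_of_pow_eq_algebraMap (hn : n ≠ 0) (hx : x ^ n = algebraMap F E a) :
    finrank F F⟮x⟯ ≤ n := by
  rw [adjoin.finrank (.of_pow_eq_algebraMap hn hx), ← natDegree_X_pow_sub_C (n := n) (r := a)]
  refine natDegree_le_natDegree (minpoly.degree_le_of_ne_zero F x (X_pow_sub_C_ne_zero
    (Nat.pos_of_ne_zero hn) a) ?_)
  simp [hx]

theorem Nat.Prime.dvd_finrank_of_pow_eq_algebraMap [FiniteDimensional F E] {p : ℕ}
    (hp : p.Prime) (ha : ∀ b : F, b ^ p ≠ a) (hx : x ^ p = algebraMap F E a) :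
    p ∣ finrank F E := by
  have hroot : aeval x (X ^ p - C a) = 0 := by simp [hx]
  have hmin : minpoly F x = X ^ p - C a :=
    (minpoly.eq_of_irreducible_of_monic (X_pow_sub_C_irreducible_of_prime hp ha) hroot
      (monic_X_pow_sub_C a hp.ne_zero)).symm
  simpa [hmin, natDegree_X_pow_sub_C] using
    minpoly.degree_dvd (IsIntegral.of_pow_eq_algebraMap hp.ne_zero hx)

end PowEqAlgebraMap

theorem cubefree_not_cube_in_quadratic_field_general (d : ℤ)
    (k : ℕ) (hkcf : ∀ p : ℕ, p.Prime → ¬ p ^ 3 ∣ k) (hk1 : k ≠ 1)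
    (s : ℂ) (hs : s ^ 2 = (d : ℂ)) :
    ¬ ∃ w : ℂ, w ∈ IntermediateField.adjoin ℚ {s} ∧ w ^ 3 = (k : ℂ) := by
  rintro ⟨w, hwK, hw3⟩
  have hs' : s ^ 2 = algebraMap ℚ ℂ d := by simpa using hs
  have : FiniteDimensional ℚ ℚ⟮s⟯ :=
    adjoin.finiteDimensional (.of_pow_eq_algebraMap two_ne_zero hs')
  have hdeg_le : finrank ℚ ℚ⟮s⟯ ≤ 2 :=
    finrank_adjoin_le_of_pow_eq_algebraMap two_ne_zero hs'
  have hdeg_dvd : 3 ∣ finrank ℚ ℚ⟮s⟯ :=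
    Nat.prime_three.dvd_finrank_of_pow_eq_algebraMap
      (x := (⟨w, hwK⟩ : ℚ⟮s⟯)) (a := (k : ℚ))
      (Rat.pow_ne_natCast_of_forall_prime_pow_not_dvd three_ne_zero hk1 hkcf)
      (Subtype.ext (by simpa using hw3))
  have hdeg_pos : 0 < finrank ℚ ℚ⟮s⟯ := finrank_pos
  omega

/-- Let `d` be a squarefree integer and `k` a positive cubefree integer with `k ≠ 1`.
Then `k` is not a cube in `K = ℚ(√d)` (realised as the subfield of `ℂ` generated by a
complex square root `s` of `d`). -/
theorem cubefree_not_cube_in_quadratic_field (d : ℤ) (hd : Squarefree d)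
    (k : ℕ) (hk : 0 < k) (hkcf : ∀ p : ℕ, p.Prime → ¬ p ^ 3 ∣ k) (hk1 : k ≠ 1)
    (s : ℂ) (hs : s ^ 2 = (d : ℂ)) :
    ¬ ∃ w : ℂ, w ∈ IntermediateField.adjoin ℚ {s} ∧ w ^ 3 = (k : ℂ) :=
  cubefree_not_cube_in_quadratic_field_general d k hkcf hk1 s hs
end

section
/- The torsion subgroup of the group of rational points of the elliptic curve y² = x³ - 432 over ℚ (which is the curve y² = x³ - 432·d³·k² with d = 1 and k = 1) is isomorphic to ℤ/3ℤ. -/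
/-!
Substituting `a = 36 + y`, `b = 36 - y`, `c = 6x` turns `y² = x³ - 432` into the Fermat cubic
`a³ + b³ = c³`. By Fermat's Last Theorem for exponent 3 (and since `x ≠ 0`, as `-432` is not a
square), one of `36 ± y` vanishes, which forces `(x, y) = (12, ±36)`. So the curve has exactly
three rational points; a group of prime order 3 is torsion and cyclic, hence isomorphic to `ℤ/3ℤ`.
-/

open WeierstrassCurve WeierstrassCurve.Affine

theorem cube_add_cube_of_sq_eq_cube_sub_432 {R : Type*} [CommRing R] {x y : R}
    (h : y ^ 2 = x ^ 3 - 432) : (36 + y) ^ 3 + (36 - y) ^ 3 = (6 * x) ^ 3 := by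
  linear_combination 216 * h

theorem Rat.sq_eq_cube_sub_432_iff {x y : ℚ} :
    y ^ 2 = x ^ 3 - 432 ↔ x = 12 ∧ (y = 36 ∨ y = -36) := by
  refine ⟨fun h ↦ ?_, by rintro ⟨rfl, rfl | rfl⟩ <;> norm_num⟩
  have hx : x ≠ 0 := by
    rintro rfl
    nlinarith [sq_nonneg y]
  have hy : y = 36 ∨ y = -36 := by
    by_contra! hy
    exact fermatLastTheoremFor_iff_rat.mp fermatLastTheoremThree _ _ _
      (fun h0 ↦ hy.2 (by linarith)) (fun h0 ↦ hy.1 (by linarith)) (by positivity)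
      (cube_add_cube_of_sq_eq_cube_sub_432 h)
  refine ⟨?_, hy⟩
  have hcube : (x - 12) * ((x + 6) ^ 2 + 108) = 0 := by
    rcases hy with rfl | rfl <;> linear_combination -h
  exact sub_eq_zero.mp ((mul_eq_zero.mp hcube).resolve_right (by positivity))

noncomputable section

def W432 : Affine ℚ := { a₁ := 0, a₂ := 0, a₃ := 0, a₄ := 0, a₆ := -432 }

namespace W432

theorem equation_iff {x y : ℚ} : W432.Equation x y ↔ y ^ 2 = x ^ 3 - 432 := by
  rw [Affine.equation_iff]
  simp only [W432]
  constructor <;> intro h <;> linear_combination h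

instance : W432.IsElliptic :=
  ⟨isUnit_iff_ne_zero.mpr (by norm_num [W432, Δ, b₂, b₄, b₆, b₈])⟩

def P : W432.Point := Point.mk (equation_iff.mpr (by norm_num : (36 : ℚ) ^ 2 = 12 ^ 3 - 432))

theorem neg_P :
    -P = Point.mk (equation_iff.mpr (by norm_num : (-36 : ℚ) ^ 2 = 12 ^ 3 - 432)) := by
  rw [P, Point.mk, Point.mk, Point.neg_some]
  simp [W432, negY]

theorem P_ne_neg_P : P ≠ -P := by
  rw [neg_P, P, Point.mk, Point.mk, Ne, Point.some.injEq]
  norm_num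

theorem eq_zero_or_eq_P_or_eq_neg_P : ∀ Q : W432.Point, Q = 0 ∨ Q = P ∨ Q = -P
  | 0 => .inl rfl
  | .some x y h => by
    obtain ⟨rfl, rfl | rfl⟩ := Rat.sq_eq_cube_sub_432_iff.mp (equation_iff.mp h.1)
    · exact .inr (.inl rfl)
    · exact .inr (.inr neg_P.symm)

theorem card_point : Nat.card W432.Point = 3 := by
  have huniv : (Set.univ : Set W432.Point) = {0, P, -P} := by
    ext Q
    simpa using eq_zero_or_eq_P_or_eq_neg_P Q
  rw [← Set.ncard_univ, Set.ncard_eq_three]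
  refine ⟨0, P, -P, (Point.some_ne_zero _).symm, ?_, P_ne_neg_P, huniv⟩
  exact (neg_ne_zero.mpr (Point.some_ne_zero _)).symm

instance : Finite W432.Point :=
  Nat.finite_of_card_ne_zero (card_point.trans_ne three_ne_zero)

end W432

end

/-- The torsion subgroup of the group of rational points of the elliptic curve
`y² = x³ - 432` over `ℚ` is isomorphic to `ℤ/3ℤ`. -/
theorem torsion_of_neg_432 :
    let W : WeierstrassCurve.Affine ℚ :=
      { a₁ := 0, a₂ := 0, a₃ := 0, a₄ := 0, a₆ := -432 }
    Nonempty (AddCommGroup.torsion W.Point ≃+ ZMod 3) := by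
  intro W
  have htop : AddCommGroup.torsion W432.Point = ⊤ :=
    AddCommGroup.torsion_eq_top_iff.mpr isAddTorsion_of_finite
  have hcard : Nat.card (AddCommGroup.torsion W432.Point) = 3 := by
    rw [htop, AddSubgroup.card_top, W432.card_point]
  have : Fact (Nat.Prime 3) := ⟨Nat.prime_three⟩
  exact ⟨addEquivOfPrimeCardEq hcard (Nat.card_zmod 3)⟩
end

section
/- Let d be a squarefree integer and k a positive cubefree integer such that d ≠ -3, k ≠ 2, and not (d = 1策 and k = 1). Then the group of rational points of the elliptic curve y² = x³ - 432·d³·k² over ℚ has trivial torsion subgroup; that is, the only rational point of finite order is the point at infinity. -/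
/-!
A point of finite order has a multiple `Q` of prime order `q`. On `y² = x³ + B` a point of order
`2` has `y = 0`, and a point of order `3` is a flex, `x (x³ + 4B) = 0`; for `B = -432 d³ k²`
these force `432 k²` to be a cube (so `k = 2`), or `-3d` to be a square (so `d = -3`), or `k²` to
be a cube and then `d` a square (so `d = k = 1`). Orders `q ≥ 5` are impossible for every
`B ≠ 0`: by Dirichlet there is a prime `p ≡ 5 (mod 6)` with `p ≡ 1 (mod q)` that avoids the
finitely many numerators and denominators met while adding `Q` to itself, so reduction mod `p`
maps `Q` to a point of order `q` on `y² = x³ + B` over `𝔽_p`; but cubing is a bijection of `𝔽_p`,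
so that curve has exactly `p + 1` points, and `q ∤ p + 1`.
-/

open WeierstrassCurve WeierstrassCurve.Affine

namespace Rat

variable (K : Type*) [Field K]

/-- For `K` of characteristic `p` these are the `p`-integral rationals; `Rat.cast` to `K` is
additive and multiplicative on them. -/
def castSubring : Subring ℚ where
  carrier := {r | (r.den : K) ≠ 0}
  mul_mem' {a b} ha hb := ne_zero_of_dvd_ne_zero (by push_cast; exact mul_ne_zero ha hb)
    (Nat.cast_dvd_cast (mul_den_dvd a b))
  one_mem' := by simp
  add_mem' {a b} ha hb := ne_zero_of_dvd_ne_zero (by push_cast; exact mul_ne_zero ha hb)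
    (Nat.cast_dvd_cast (add_den_dvd a b))
  zero_mem' := by simp
  neg_mem' {a} ha := by simpa using ha

variable {K}

lemma mem_castSubring {r : ℚ} : r ∈ castSubring K ↔ (r.den : K) ≠ 0 := Iff.rfl

lemma ofNat_mem_castSubring (n : ℕ) [n.AtLeastTwo] : (OfNat.ofNat n : ℚ) ∈ castSubring K :=
  natCast_mem _ n

lemma mem_castSubring_of_cast_ne_zero {r : ℚ} (h : (r : K) ≠ 0) : r ∈ castSubring K := by
  intro h0
  apply h
  rw [cast_def, h0, div_zero]

lemma num_cast_ne_zero_of_cast_ne_zero {r : ℚ} (h : (r : K) ≠ 0) : (r.num : K) ≠ 0 := by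
  intro h0
  apply h
  rw [cast_def, h0, zero_div]

lemma inv_mem_castSubring {r : ℚ} (h : (r : K) ≠ 0) : r⁻¹ ∈ castSubring K := by
  have hr : r ≠ 0 := by rintro rfl; simp at h
  rw [mem_castSubring, den_inv_of_ne_zero hr]
  have := num_cast_ne_zero_of_cast_ne_zero h
  rcases Int.natAbs_eq r.num with h' | h' <;> rw [h'] at this <;> simpa using this

lemma cast_pow_of_mem {r : ℚ} (hr : r ∈ castSubring K) : ∀ n : ℕ, ((r ^ n : ℚ) : K) = (r : K) ^ n
  | 0 => by simp
  | n + 1 => by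
    rw [pow_succ, cast_mul_of_ne_zero (pow_mem hr n) hr, cast_pow_of_mem hr n, pow_succ]

lemma div_mem_castSubring {a b : ℚ} (ha : a ∈ castSubring K) (hb : (b : K) ≠ 0) :
    a / b ∈ castSubring K :=
  div_eq_mul_inv a b ▸ mul_mem ha (inv_mem_castSubring hb)

lemma cast_div_of_mem {a b : ℚ} (ha : a ∈ castSubring K) (hb : (b : K) ≠ 0) :
    ((a / b : ℚ) : K) = a / b :=
  cast_div_of_ne_zero ha (num_cast_ne_zero_of_cast_ne_zero hb)

lemma cast_zmod_ne_zero_of_lt {p : ℕ} [Fact p.Prime] {r : ℚ} (hr : r ≠ 0)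
    (hp : r.num.natAbs + r.den < p) : (r : ZMod p) ≠ 0 := by
  have hnum : (r.num : ZMod p) ≠ 0 := by
    rw [Ne, ZMod.intCast_zmod_eq_zero_iff_dvd, Int.natCast_dvd]
    exact Nat.not_dvd_of_pos_of_lt (by simpa using hr) (by omega)
  have hden : (r.den : ZMod p) ≠ 0 := by
    rw [Ne, ZMod.natCast_eq_zero_iff]
    exact Nat.not_dvd_of_pos_of_lt r.den_pos (by omega)
  rw [cast_def]
  exact div_ne_zero hnum hden

lemma exists_int_pow_eq_of_pow_eq {r : ℚ} {m : ℤ} {n : ℕ} (hn : n ≠ 0) (h : r ^ n = m) :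
    ∃ t : ℤ, t ^ n = m := by
  have hden : r.den = 1 := (pow_eq_one_iff_left hn).mp (by rw [← den_pow, h, den_intCast])
  refine ⟨r.num, Int.cast_injective (α := ℚ) ?_⟩
  rw [Int.cast_pow, ← h, ← Rat.num_div_den r, hden]
  simp

end Rat

lemma Nat.factorization_eq_mod_three_of_cube_eq {a k t : ℕ} (ha : a ≠ 0) (hk : k ≠ 0)
    (hkcf : ∀ p : ℕ, p.Prime → ¬ p ^ 3 ∣ k) (h : t ^ 3 = a * k ^ 2) (p : ℕ) :
    k.factorization p = a.factorization p % 3 := by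
  by_cases hp : p.Prime
  · have hv := congrArg (fun n => n.factorization p) h
    simp only [Nat.factorization_pow, Nat.factorization_mul ha (pow_ne_zero 2 hk),
      Finsupp.smul_apply, Finsupp.add_apply, smul_eq_mul] at hv
    have hk2 : k.factorization p ≤ 2 := by
      by_contra! h3
      exact hkcf p hp ((hp.pow_dvd_iff_le_factorization hk).mpr h3)
    omega
  · simp [Nat.factorization_eq_zero_of_not_prime _ hp]

lemma eq_two_of_cube_eq_432_mul_sq {k : ℕ} {t : ℤ} (hk : k ≠ 0)
    (hkcf : ∀ p : ℕ, p.Prime → ¬ p ^ 3 ∣ k) (h : t ^ 3 = 432 * (k : ℤ) ^ 2) : k = 2 := by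
  have h' : t.natAbs ^ 3 = 432 * k ^ 2 := by
    simpa [Int.natAbs_mul, Int.natAbs_pow] using congrArg Int.natAbs h
  have h432 : (432 : ℕ).factorization = Finsupp.single 2 4 + Finsupp.single 3 3 := by
    rw [show (432 : ℕ) = 2 ^ 4 * 3 ^ 3 by norm_num,
      Nat.factorization_mul (by norm_num) (by norm_num),
      Nat.prime_two.factorization_pow, Nat.prime_three.factorization_pow]
  refine Nat.eq_of_factorization_eq hk two_ne_zero fun p => ?_
  rw [Nat.factorization_eq_mod_three_of_cube_eq (by norm_num) hk hkcf h', h432,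
    Nat.prime_two.factorization]
  simp only [Finsupp.add_apply, Finsupp.single_apply]
  split_ifs <;> omega

lemma eq_one_of_cube_eq_sq {k : ℕ} {t : ℤ} (hk : k ≠ 0) (hkcf : ∀ p : ℕ, p.Prime → ¬ p ^ 3 ∣ k)
    (h : t ^ 3 = (k : ℤ) ^ 2) : k = 1 := by
  have h' : t.natAbs ^ 3 = 1 * k ^ 2 := by
    simpa [Int.natAbs_pow] using congrArg Int.natAbs h
  exact Nat.eq_of_factorization_eq hk one_ne_zero fun p => by
    simp [Nat.factorization_eq_mod_three_of_cube_eq one_ne_zero hk hkcf h' p]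

lemma Int.eq_one_of_squarefree_of_sq_eq {d t : ℤ} (hd : Squarefree d) (h : t ^ 2 = d) : d = 1 := by
  rcases Int.isUnit_iff.mp (hd t ⟨1, by rw [← h]; ring⟩) with rfl | rfl <;> simp [← h]

lemma Int.eq_neg_three_of_squarefree_of_sq_eq {d t : ℤ} (hd : Squarefree d)
    (h : t ^ 2 = -3 * d) : d = -3 := by
  obtain ⟨s, rfl⟩ : (3 : ℤ) ∣ t :=
    Int.prime_three.dvd_of_dvd_pow (n := 2) ⟨-d, by rw [h]; ring⟩
  have hd' : d = -3 * s ^ 2 := by linarith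
  rcases Int.isUnit_iff.mp (hd s ⟨-3, by rw [hd']; ring⟩) with rfl | rfl <;> simp [hd']

lemma Nat.exists_prime_gt_mod_six_eq_five_modEq_one {q : ℕ} (hq : q.Coprime 6) (N : ℕ) :
    ∃ p > N, p.Prime ∧ p % 6 = 5 ∧ p ≡ 1 [MOD q] := by
  obtain ⟨a, ha6, haq⟩ := Nat.chineseRemainder hq.symm 5 1
  have hcop : a.Coprime (6 * q) :=
    Nat.Coprime.mul_right (by rw [Nat.Coprime, ha6.gcd_eq]; rfl)
      (by rw [Nat.Coprime, haq.gcd_eq, Nat.gcd_one_left])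
  obtain ⟨p, hpN, hp, hpa⟩ := Nat.forall_exists_prime_gt_and_modEq N
    (Nat.mul_ne_zero (by norm_num) fun h => by simp [h] at hq) hcop
  exact ⟨p, hpN, hp, (hpa.of_mul_right q).trans ha6, (hpa.of_mul_left 6).trans haq⟩

lemma ZMod.pow_three_bijective {p : ℕ} [Fact p.Prime] (hp : p % 3 = 2) :
    Function.Bijective (fun x : ZMod p => x ^ 3) := by
  refine Finite.injective_iff_bijective.mp fun u v (huv : u ^ 3 = v ^ 3) => ?_
  by_cases hv : v = 0
  · subst hv
    simpa using huv
  have hu : u ≠ 0 := by rintro rfl; exact hv (by simpa using huv.symm)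
  have hcop : (Nat.card (ZMod p)ˣ).Coprime 3 := by
    rw [Nat.card_eq_fintype_card, ZMod.card_units, Nat.coprime_comm,
      Nat.Prime.coprime_iff_not_dvd Nat.prime_three]
    omega
  exact congrArg Units.val <| hcop.pow_left_bijective.injective
    (a₁ := Units.mk0 u hu) (a₂ := Units.mk0 v hv) (Units.ext (by simpa using huv))

def mordellCurve {R : Type*} [CommRing R] (B : R) : Affine R :=
  { a₁ := 0, a₂ := 0, a₃ := 0, a₄ := 0, a₆ := B }

namespace mordellCurve

section CommRing

variable {R : Type*} [CommRing R] {B : R}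

@[simp] lemma a₁_eq : (mordellCurve B).a₁ = 0 := rfl
@[simp] lemma a₂_eq : (mordellCurve B).a₂ = 0 := rfl
@[simp] lemma a₃_eq : (mordellCurve B).a₃ = 0 := rfl
@[simp] lemma a₄_eq : (mordellCurve B).a₄ = 0 := rfl
@[simp] lemma a₆_eq : (mordellCurve B).a₆ = B := rfl

lemma equation_iff {x y : R} : (mordellCurve B).Equation x y ↔ y ^ 2 = x ^ 3 + B := by
  simp [Affine.equation_iff]

@[simp] lemma negY_eq (x y : R) : (mordellCurve B).negY x y = -y := by simp

@[simp] lemma addX_eq (x₁ x₂ ℓ : R) : (mordellCurve B).addX x₁ x₂ ℓ = ℓ ^ 2 - x₁ - x₂ := by simp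

@[simp] lemma addY_eq (x₁ x₂ y₁ ℓ : R) :
    (mordellCurve B).addY x₁ x₂ y₁ ℓ = -(ℓ * (ℓ ^ 2 - x₁ - x₂ - x₁) + y₁) := by simp [addY]

lemma Δ_eq : (mordellCurve B).Δ = -432 * B ^ 2 := by
  simp [WeierstrassCurve.Δ, b₂, b₄, b₆, b₈]; ring

/-- Junk value `0` at infinity. -/
def xCoord {W : Affine R} : W.Point → R
  | .zero => 0
  | .some x _ _ => x

def CoordsMem {W : Affine R} (S : Subring R) : W.Point → Prop
  | .zero => True
  | .some x y _ => x ∈ S ∧ y ∈ S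

end CommRing

lemma two_ne_zero_of_Δ_ne_zero {F : Type*} [Field F] {B : F} (hΔ : (mordellCurve B).Δ ≠ 0) :
    (2 : F) ≠ 0 := fun h => hΔ (by rw [Δ_eq]; linear_combination (-216 * B ^ 2) * h)

section CharZero

variable {F : Type*} [Field F] [CharZero F] [DecidableEq F] {B x y : F}
  {h : (mordellCurve B).Nonsingular x y}

lemma two_nsmul_eq_zero_iff : 2 • Point.some x y h = 0 ↔ y = 0 := by
  rw [two_nsmul]
  refine ⟨fun h2 => ?_, fun hy => Point.add_self_of_Y_eq (by simp [hy])⟩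
  by_contra hy
  rw [Point.add_self_of_Y_ne (by simpa [self_eq_neg] using hy)] at h2
  exact Point.some_ne_zero _ h2

lemma X_mul_eq_zero_of_three_nsmul_eq_zero (h3 : 3 • Point.some x y h = 0) (hy : y ≠ 0) :
    x * (x ^ 3 + 4 * B) = 0 := by
  have hy' : y ≠ (mordellCurve B).negY x y := by simpa [self_eq_neg] using hy
  have h2 : 2 • Point.some x y h = -Point.some x y h :=
    eq_neg_of_add_eq_zero_left (by rwa [← succ_nsmul])
  rw [two_nsmul, Point.add_self_of_Y_ne hy', Point.neg_some, Point.some.injEq,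
    slope_of_Y_ne rfl hy'] at h2
  have h2y : y + y ≠ 0 := by simpa [← two_mul] using hy
  have hX := h2.1
  simp only [addX_eq, a₁_eq, a₂_eq, a₄_eq, negY_eq] at hX
  field_simp at hX
  linear_combination (-1 / 3 : F) * hX - 4 * x * (equation_iff.mp h.1)

end CharZero

section Reduction

open Rat

variable {K : Type*} [Field K] {B : ℚ}

open Classical in
/-- Only meaningful on points with coordinates in `castSubring K`; the others go to `0`. -/
noncomputable def reduce (K : Type*) [Field K] (B : ℚ) :
    (mordellCurve B).Point → (mordellCurve (B : K)).Point
  | .zero => 0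
  | .some x y _ => if h : (mordellCurve (B : K)).Nonsingular x y then .some _ _ h else 0

lemma nonsingular_cast (hB : B ∈ castSubring K) (hΔ : (mordellCurve (B : K)).Δ ≠ 0) {x y : ℚ}
    (h : (mordellCurve B).Nonsingular x y) (hx : x ∈ castSubring K) (hy : y ∈ castSubring K) :
    (mordellCurve (B : K)).Nonsingular x y := by
  rw [← Affine.equation_iff_nonsingular_of_Δ_ne_zero hΔ, equation_iff,
    ← cast_pow_of_mem hy, ← cast_pow_of_mem hx, ← cast_add_of_ne_zero (pow_mem hx 3) hB,
    (equation_iff.mp h.1)]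

lemma reduce_some (hB : B ∈ castSubring K) (hΔ : (mordellCurve (B : K)).Δ ≠ 0) {x y : ℚ}
    (h : (mordellCurve B).Nonsingular x y) (hx : x ∈ castSubring K) (hy : y ∈ castSubring K) :
    reduce K B (.some _ _ h) = .some _ _ (nonsingular_cast hB hΔ h hx hy) := by
  simp [reduce, nonsingular_cast hB hΔ h hx hy]

lemma addX_mem_and_cast {x₁ x₂ ℓ : ℚ} (hx₁ : x₁ ∈ castSubring K) (hx₂ : x₂ ∈ castSubring K)
    (hℓ : ℓ ∈ castSubring K) :
    (mordellCurve B).addX x₁ x₂ ℓ ∈ castSubring K ∧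
      ((mordellCurve B).addX x₁ x₂ ℓ : K) = (mordellCurve (B : K)).addX x₁ x₂ ℓ := by
  simp only [addX_eq]
  refine ⟨sub_mem (sub_mem (pow_mem hℓ 2) hx₁) hx₂, ?_⟩
  rw [cast_sub_of_ne_zero (sub_mem (pow_mem hℓ 2) hx₁) hx₂,
    cast_sub_of_ne_zero (pow_mem hℓ 2) hx₁, cast_pow_of_mem hℓ]

lemma addY_mem_and_cast {x₁ x₂ y₁ ℓ : ℚ} (hx₁ : x₁ ∈ castSubring K)
    (hx₂ : x₂ ∈ castSubring K) (hy₁ : y₁ ∈ castSubring K) (hℓ : ℓ ∈ castSubring K) :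
    (mordellCurve B).addY x₁ x₂ y₁ ℓ ∈ castSubring K ∧
      ((mordellCurve B).addY x₁ x₂ y₁ ℓ : K) = (mordellCurve (B : K)).addY x₁ x₂ y₁ ℓ := by
  obtain ⟨hX, hXK⟩ := addX_mem_and_cast (B := B) (K := K) hx₁ hx₂ hℓ
  simp only [addX_eq] at hX hXK
  have hmem := mul_mem hℓ (sub_mem hX hx₁)
  simp only [addY_eq]
  refine ⟨neg_mem (add_mem hmem hy₁), ?_⟩
  rw [cast_neg, cast_add_of_ne_zero hmem hy₁, cast_mul_of_ne_zero hℓ (sub_mem hX hx₁),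
    cast_sub_of_ne_zero hX hx₁, hXK]

variable [DecidableEq K]

lemma slope_mem_and_cast {x₁ y₁ x₂ y₂ : ℚ} (h₁ : (mordellCurve B).Equation x₁ y₁)
    (h₂ : (mordellCurve B).Equation x₂ y₂)
    (hx₁ : x₁ ∈ castSubring K) (hy₁ : y₁ ∈ castSubring K) (hx₂ : x₂ ∈ castSubring K)
    (hy₂ : y₂ ∈ castSubring K)
    (hgood : (x₁ : K) = x₂ → x₁ = x₂ ∧ ((y₁ : K) = -y₂ → y₁ = -y₂))
    (hneg : ¬(x₁ = x₂ ∧ y₁ = -y₂)) :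
    ¬((x₁ : K) = x₂ ∧ (y₁ : K) = -y₂) ∧ (mordellCurve B).slope x₁ x₂ y₁ y₂ ∈ castSubring K ∧
      ((mordellCurve B).slope x₁ x₂ y₁ y₂ : K) =
        (mordellCurve (B : K)).slope (x₁ : K) (x₂ : K) (y₁ : K) (y₂ : K) := by
  by_cases hx : x₁ = x₂
  · subst hx
    have hy : y₁ = y₂ := (Affine.Y_eq_of_X_eq h₁ h₂ rfl).resolve_right (by simpa using hneg)
    subst hy
    have hyK : (y₁ : K) ≠ -y₁ := fun h => hneg ⟨rfl, (hgood rfl).2 h⟩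
    have hden : (((y₁ + y₁ : ℚ)) : K) ≠ 0 := by
      rw [cast_add_of_ne_zero hy₁ hy₁]
      exact fun h => hyK (eq_neg_of_add_eq_zero_left h)
    have h3 : 3 * x₁ ^ 2 ∈ castSubring K := mul_mem (ofNat_mem_castSubring 3) (pow_mem hx₁ 2)
    refine ⟨fun h => hyK h.2, ?_⟩
    rw [slope_of_Y_ne rfl (by simpa using hneg), slope_of_Y_ne rfl (by simpa using hyK)]
    simp only [negY_eq, a₁_eq, a₂_eq, a₄_eq, mul_zero, zero_mul, add_zero, sub_zero, sub_neg_eq_add]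
    refine ⟨div_mem_castSubring h3 hden, ?_⟩
    rw [cast_div_of_mem h3 hden, cast_mul_of_ne_zero (ofNat_mem_castSubring 3) (pow_mem hx₁ 2),
      cast_pow_of_mem hx₁, cast_add_of_ne_zero hy₁ hy₁, cast_ofNat]
  · have hxK : (x₁ : K) ≠ x₂ := fun h => hx (hgood h).1
    have hden : ((x₁ - x₂ : ℚ) : K) ≠ 0 := by
      rw [cast_sub_of_ne_zero hx₁ hx₂]
      exact sub_ne_zero.mpr hxK
    refine ⟨fun h => hxK h.1, ?_⟩
    rw [slope_of_X_ne hx, slope_of_X_ne hxK]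
    refine ⟨div_mem_castSubring (sub_mem hy₁ hy₂) hden, ?_⟩
    rw [cast_div_of_mem (sub_mem hy₁ hy₂) hden, cast_sub_of_ne_zero hy₁ hy₂,
      cast_sub_of_ne_zero hx₁ hx₂]


/-- `hgood` says that reduction creates no coincidence `x̄₁ = x̄₂` or `ȳ₁ = -ȳ₂` that is absent
over `ℚ`; then the slope of the sum has a denominator that is a unit in `K`. -/
lemma reduce_add_some (hB : B ∈ castSubring K) (hΔ : (mordellCurve (B : K)).Δ ≠ 0)
    {x₁ y₁ x₂ y₂ : ℚ} {h₁ : (mordellCurve B).Nonsingular x₁ y₁}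
    {h₂ : (mordellCurve B).Nonsingular x₂ y₂}
    (hx₁ : x₁ ∈ castSubring K) (hy₁ : y₁ ∈ castSubring K) (hx₂ : x₂ ∈ castSubring K)
    (hy₂ : y₂ ∈ castSubring K)
    (hgood : (x₁ : K) = x₂ → x₁ = x₂ ∧ ((y₁ : K) = -y₂ → y₁ = -y₂)) :
    CoordsMem (castSubring K) (.some _ _ h₁ + .some _ _ h₂) ∧
      reduce K B (.some _ _ h₁ + .some _ _ h₂) =
        reduce K B (.some _ _ h₁) + reduce K B (.some _ _ h₂) := by
  rw [reduce_some hB hΔ h₁ hx₁ hy₁, reduce_some hB hΔ h₂ hx₂ hy₂]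
  by_cases hneg : x₁ = x₂ ∧ y₁ = -y₂
  · rw [Point.add_of_Y_eq hneg.1 (by simpa using hneg.2),
      Point.add_of_Y_eq (by rw [hneg.1]) (by simp [hneg.2])]
    exact ⟨trivial, rfl⟩
  obtain ⟨hnegK, hℓ, hℓK⟩ := slope_mem_and_cast h₁.1 h₂.1 hx₁ hy₁ hx₂ hy₂ hgood hneg
  obtain ⟨hX, hXK⟩ := addX_mem_and_cast (B := B) hx₁ hx₂ hℓ
  obtain ⟨hY, hYK⟩ := addY_mem_and_cast (B := B) hx₁ hx₂ hy₁ hℓ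
  rw [Point.add_some (by simpa using hneg), Point.add_some (by simpa using hnegK),
    reduce_some hB hΔ _ hX hY]
  exact ⟨⟨hX, hY⟩, by simp only [hXK, hYK, hℓK]⟩

lemma reduce_nsmul (hB : B ∈ castSubring K) (hΔ : (mordellCurve (B : K)).Δ ≠ 0) {x₁ y₁ : ℚ}
    (h₁ : (mordellCurve B).Nonsingular x₁ y₁) (hx₁ : x₁ ∈ castSubring K)
    (hy₁ : y₁ ∈ castSubring K) (hy₁K : (y₁ : K) ≠ 0) {n : ℕ}
    (hsep : ∀ j < n, xCoord (j • Point.some _ _ h₁) ≠ x₁ →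
      ((xCoord (j • Point.some _ _ h₁) - x₁ : ℚ) : K) ≠ 0) :
    ∀ j ≤ n, CoordsMem (castSubring K) (j • Point.some _ _ h₁) ∧
      reduce K B (j • Point.some _ _ h₁) = j • reduce K B (.some _ _ h₁) := by
  intro j hj
  induction j with
  | zero => exact ⟨trivial, rfl⟩
  | succ j ih =>
    obtain ⟨hmem, hred⟩ := ih (by omega)
    rw [succ_nsmul, succ_nsmul, ← hred]
    cases hjP : j • Point.some _ _ h₁ with
    | zero => exact ⟨⟨hx₁, hy₁⟩, rfl⟩
    | some x y h =>
      have hsepj := hsep j (by omega)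
      rw [hjP] at hmem hsepj
      refine reduce_add_some hB hΔ hmem.1 hmem.2 hx₁ hy₁ fun hxK => ?_
      have hx : x = x₁ := by
        by_contra hne
        refine hsepj hne ?_
        rw [xCoord, cast_sub_of_ne_zero hmem.1 hx₁, hxK, sub_self]
      refine ⟨hx, fun hyK => ?_⟩
      rcases Affine.Y_eq_of_X_eq h.1 h₁.1 hx with rfl | hy
      · exact absurd (by linear_combination hyK) (mul_ne_zero (two_ne_zero_of_Δ_ne_zero hΔ) hy₁K)
      · simpa using hy

lemma addOrderOf_reduce {q : ℕ} [Fact q.Prime] (hB : B ∈ castSubring K)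
    (hΔ : (mordellCurve (B : K)).Δ ≠ 0) {x₁ y₁ : ℚ} (h₁ : (mordellCurve B).Nonsingular x₁ y₁)
    (hx₁ : x₁ ∈ castSubring K) (hy₁ : y₁ ∈ castSubring K) (hy₁K : (y₁ : K) ≠ 0)
    (hP : addOrderOf (Point.some _ _ h₁) = q)
    (hsep : ∀ j < q, xCoord (j • Point.some _ _ h₁) ≠ x₁ →
      ((xCoord (j • Point.some _ _ h₁) - x₁ : ℚ) : K) ≠ 0) :
    addOrderOf (reduce K B (.some _ _ h₁)) = q := by
  refine addOrderOf_eq_prime ?_ ?_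
  · rw [← (reduce_nsmul hB hΔ h₁ hx₁ hy₁ hy₁K hsep q le_rfl).2, ← hP, addOrderOf_nsmul_eq_zero]
    rfl
  · rw [reduce_some hB hΔ h₁ hx₁ hy₁]
    exact Point.some_ne_zero _

end Reduction

variable {p : ℕ} [Fact p.Prime]

lemma Δ_ne_zero_of_mod_six (hp : p % 6 = 5) {B : ZMod p} (hB : B ≠ 0) :
    (mordellCurve B).Δ ≠ 0 := by
  have h432 : ((2 ^ 4 * 3 ^ 3 : ℕ) : ZMod p) ≠ 0 := by
    rw [Ne, ZMod.natCast_eq_zero_iff]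
    intro h
    rcases (Nat.Prime.dvd_mul Fact.out).mp h with h | h <;>
      have := Nat.le_of_dvd (by norm_num) (Nat.Prime.dvd_of_dvd_pow Fact.out h) <;> omega
  norm_num at h432
  simp [Δ_eq, h432, hB]

lemma card_point_zmod (hp : p % 6 = 5) {B : ZMod p} (hB : B ≠ 0) :
    Nat.card (mordellCurve B).Point = p + 1 := by
  have hcube := ZMod.pow_three_bijective (p := p) (by omega)
  have hns : ∀ {x y : ZMod p}, y ^ 2 = x ^ 3 + B → (mordellCurve B).Nonsingular x y := fun h =>
    (Affine.equation_iff_nonsingular_of_Δ_ne_zero (Δ_ne_zero_of_mod_six hp hB)).mp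
      (equation_iff.mpr h)
  have hy : Function.Bijective fun P : (mordellCurve B).Point =>
      match P with
      | .zero => none
      | .some _ y _ => some y := by
    refine ⟨?_, ?_⟩
    · rintro (_ | ⟨x, y, h⟩) (_ | ⟨x', y', h'⟩) hyy <;>
        simp only [Option.some.injEq, reduceCtorEq] at hyy
      · rfl
      · subst hyy
        have hx : x = x' := hcube.1 (show x ^ 3 = x' ^ 3 by
          linear_combination (equation_iff.mp h'.1) - (equation_iff.mp h.1))
        subst hx
        rfl
    · rintro (_ | y)
      · exact ⟨0, rfl⟩
      · obtain ⟨x, hx⟩ := hcube.2 (y ^ 2 - B)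
        exact ⟨.some x y (hns (by simp only at hx; rw [hx]; ring)), rfl⟩
  rw [Nat.card_eq_of_bijective _ hy, Nat.card_eq_fintype_card, Fintype.card_option, ZMod.card]

open Rat in
theorem prime_addOrderOf_le_three {B : ℚ} (hB : B ≠ 0) {P : (mordellCurve B).Point} {q : ℕ}
    (hq : q.Prime) (hP : addOrderOf P = q) : q ≤ 3 := by
  by_contra! hq3
  have := Fact.mk hq
  rcases P with _ | ⟨x₁, y₁, h₁⟩
  · exact hq.one_lt.ne' (hP.symm.trans addOrderOf_zero)
  have hy₁ : y₁ ≠ 0 := fun hy₁ => by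
    have := Nat.le_of_dvd two_pos
      (hP ▸ addOrderOf_dvd_of_nsmul_eq_zero (two_nsmul_eq_zero_iff.mpr hy₁))
    omega
  let T : Finset ℚ :=
    {B, x₁, y₁} ∪ (Finset.range q).image fun j => xCoord (j • Point.some _ _ h₁) - x₁
  have hq6 : q.Coprime 6 := Nat.Coprime.mul_right
    ((Nat.coprime_primes hq Nat.prime_two).mpr (by omega))
    ((Nat.coprime_primes hq Nat.prime_three).mpr (by omega))
  obtain ⟨p, hpN, hp, hp6, hpq⟩ :=
    Nat.exists_prime_gt_mod_six_eq_five_modEq_one hq6 (∑ r ∈ T, (r.num.natAbs + r.den))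
  have := Fact.mk hp
  have hT : ∀ r ∈ T, r ≠ 0 → (r : ZMod p) ≠ 0 := fun r hr hr0 =>
    cast_zmod_ne_zero_of_lt hr0 ((Finset.single_le_sum (fun _ _ => Nat.zero_le _) hr).trans_lt hpN)
  have hmem : ∀ r ∈ T, r ∈ castSubring (ZMod p) := fun r hr => by
    rcases eq_or_ne r 0 with rfl | hr0
    · exact zero_mem _
    · exact mem_castSubring_of_cast_ne_zero (hT r hr hr0)
  have hBK : (B : ZMod p) ≠ 0 := hT B (by simp [T]) hB
  have hR := addOrderOf_reduce (hmem B (by simp [T])) (Δ_ne_zero_of_mod_six hp6 hBK) h₁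
    (hmem x₁ (by simp [T])) (hmem y₁ (by simp [T])) (hT y₁ (by simp [T]) hy₁) hP
    fun j hj hne => hT _
      (Finset.mem_union_right _ (Finset.mem_image_of_mem _ (Finset.mem_range.mpr hj)))
      (sub_ne_zero.mpr hne)
  have hdvd : q ∣ p + 1 := card_point_zmod hp6 hBK ▸ hR ▸ addOrderOf_dvd_natCard _
  have := Nat.le_of_dvd two_pos (((hpq.add_right 1).dvd_iff dvd_rfl).mp hdvd)
  omega

end mordellCurve

lemma IsOfFinAddOrder.exists_prime_addOrderOf {G : Type*} [AddMonoid G] {x : G}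
    (hx : IsOfFinAddOrder x) (hx0 : x ≠ 0) : ∃ (q : ℕ) (y : G), q.Prime ∧ addOrderOf y = q := by
  set n := addOrderOf x
  have hn1 : n ≠ 1 := fun h => hx0 (AddMonoid.addOrderOf_eq_one_iff.mp h)
  have hn0 : n ≠ 0 := hx.addOrderOf_pos.ne'
  have hq := Nat.minFac_dvd n
  refine ⟨n.minFac, (n / n.minFac) • x, Nat.minFac_prime hn1, ?_⟩
  rw [addOrderOf_nsmul_of_dvd (Nat.div_ne_zero_iff_of_dvd hq |>.mpr ⟨hn0, (Nat.minFac_pos n).ne'⟩)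
    (Nat.div_dvd_of_dvd hq), Nat.div_div_self hq hn0]

section

variable {d : ℤ} {k : ℕ} {P : (mordellCurve (-432 * (d : ℚ) ^ 3 * (k : ℚ) ^ 2)).Point}

lemma k_eq_two_of_addOrderOf_eq_two (hd : d ≠ 0) (hk : k ≠ 0)
    (hkcf : ∀ p : ℕ, p.Prime → ¬ p ^ 3 ∣ k) (hP : addOrderOf P = 2) : k = 2 := by
  cases P with
  | zero => simp [← Point.zero_def] at hP
  | some x y h =>
  have hy := mordellCurve.two_nsmul_eq_zero_iff.mp (hP ▸ addOrderOf_nsmul_eq_zero _)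
  have heq := mordellCurve.equation_iff.mp h.1
  subst hy
  obtain ⟨t, ht⟩ := Rat.exists_int_pow_eq_of_pow_eq three_ne_zero
    (show (x / d) ^ 3 = ((432 * (k : ℤ) ^ 2 : ℤ) : ℚ) by
      field_simp; push_cast; linear_combination -heq)
  exact eq_two_of_cube_eq_432_mul_sq hk hkcf ht

lemma d_eq_neg_three_or_of_addOrderOf_eq_three (hd : Squarefree d) (hk : k ≠ 0)
    (hkcf : ∀ p : ℕ, p.Prime → ¬ p ^ 3 ∣ k) (hP : addOrderOf P = 3) :
    d = -3 ∨ (d = 1 ∧ k = 1) := by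
  cases P with
  | zero => simp [← Point.zero_def] at hP
  | some x y h =>
  have heq := mordellCurve.equation_iff.mp h.1
  have hd0 : (d : ℚ) ≠ 0 := by exact_mod_cast hd.ne_zero
  have hy : y ≠ 0 := fun hy => by
    have := hP ▸ addOrderOf_dvd_of_nsmul_eq_zero (mordellCurve.two_nsmul_eq_zero_iff.mpr hy)
    norm_num at this
  rcases mul_eq_zero.mp (mordellCurve.X_mul_eq_zero_of_three_nsmul_eq_zero
    (hP ▸ addOrderOf_nsmul_eq_zero _) hy) with rfl | hx
  · obtain ⟨t, ht⟩ := Rat.exists_int_pow_eq_of_pow_eq two_ne_zero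
      (show (y / (12 * d * k)) ^ 2 = ((-3 * d : ℤ) : ℚ) by
        field_simp; push_cast; linear_combination heq)
    exact .inl (Int.eq_neg_three_of_squarefree_of_sq_eq hd ht)
  · obtain ⟨t, ht⟩ := Rat.exists_int_pow_eq_of_pow_eq three_ne_zero
      (show (x / (12 * d)) ^ 3 = (((k : ℤ) ^ 2 : ℤ) : ℚ) by
        field_simp; push_cast; linear_combination hx)
    obtain rfl := eq_one_of_cube_eq_sq hk hkcf ht
    obtain rfl : x = 12 * d :=
      (Odd.pow_inj (n := 3) (by decide)).mp (by push_cast at hx; linear_combination hx)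
    obtain ⟨s, hs⟩ := Rat.exists_int_pow_eq_of_pow_eq two_ne_zero
      (show (y / (36 * d)) ^ 2 = (d : ℚ) by field_simp; push_cast at heq; linear_combination heq)
    exact .inr ⟨Int.eq_one_of_squarefree_of_sq_eq hd hs, rfl⟩

end

/-- Let `d` be a squarefree integer and `k` a positive cubefree integer with `d ≠ -3`,
`k ≠ 2`, and not both `d = 1` and `k = 1`. Then the group of rational points of the
elliptic curve `y² = x³ - 432·d³·k²` over `ℚ` has trivial torsion: the only rational
point of finite order is the point at infinity. -/
theorem torsion_trivial (d : ℤ) (hd : Squarefree d) (k : ℕ) (hk : 0 < k)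
    (hkcf : ∀ p : ℕ, p.Prime → ¬ p ^ 3 ∣ k)
    (hd3 : d ≠ -3) (hk2 : k ≠ 2) (hdk : ¬ (d = 1 ∧ k = 1)) :
    let W : WeierstrassCurve.Affine ℚ :=
      { a₁ := 0, a₂ := 0, a₃ := 0, a₄ := 0, a₆ := -432 * (d : ℚ) ^ 3 * (k : ℚ) ^ 2 }
    ∀ P : W.Point, IsOfFinAddOrder P → P = 0 := by
  intro W P hP
  by_contra hP0
  obtain ⟨q, Q, hq, hQ⟩ := hP.exists_prime_addOrderOf hP0
  have hB : -432 * (d : ℚ) ^ 3 * (k : ℚ) ^ 2 ≠ 0 := by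
    have := hd.ne_zero
    positivity
  obtain rfl | rfl : q = 2 ∨ q = 3 := by
    have := mordellCurve.prime_addOrderOf_le_three hB hq hQ
    have := hq.two_le
    omega
  · exact hk2 (k_eq_two_of_addOrderOf_eq_two hd.ne_zero hk.ne' hkcf hQ)
  · rcases d_eq_neg_three_or_of_addOrderOf_eq_three hd hk.ne' hkcf hQ with h | h
    exacts [hd3 h, hdk h]
end

section
/- Let d be a squarefree integer and k a positive cubefree integer. Then -432·d³·k² is a perfect sixth power (i.e., there exists an integer b with -432·d³·k² = b⁶) if and only if d = -3 and k = 2. -/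
/-!
Write `e = |d|` and `m = |b|`, so that `2⁴·3³·e³·k² = m⁶`. At each prime `p`,
`v_p(2⁴·3³) + 3 v_p(e) + 2 v_p(k)` is divisible by `6`, while `v_p(e) ≤ 1` and `v_p(k) ≤ 2`;
reducing modulo `2` and `3` leaves only `v_p(e) = [p = 3]` and `v_p(k) = [p = 2]`.
Hence `e = 3`, `k = 2`, and `d = 3` is excluded because `b⁶ ≥ 0`.
-/

open Finsupp

lemma Nat.factorization_le_two_of_cubefree {k : ℕ} (hk : k ≠ 0)
    (hcf : ∀ p : ℕ, p.Prime → ¬ p ^ 3 ∣ k) (p : ℕ) : k.factorization p ≤ 2 := by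
  by_cases hp : p.Prime
  · have := hcf p hp
    rw [hp.pow_dvd_iff_le_factorization hk] at this
    omega
  · simp [Nat.factorization_eq_zero_of_not_prime k hp]

lemma Nat.factorization_432_mul_pow_three_mul_sq {e k : ℕ} (he : e ≠ 0) (hk : k ≠ 0) :
    (432 * e ^ 3 * k ^ 2).factorization
      = single 2 4 + single 3 3 + 3 • e.factorization + 2 • k.factorization := by
  rw [show (432 : ℕ) = 2 ^ 4 * 3 ^ 3 by norm_num,
    Nat.factorization_mul (by positivity) (by positivity),
    Nat.factorization_mul (by positivity) (by positivity),
    Nat.factorization_mul (by positivity) (by positivity)]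
  simp only [Nat.factorization_pow, Nat.prime_two.factorization, Nat.prime_three.factorization,
    smul_single, smul_eq_mul]

lemma valuations_of_sixth_power {p a c s : ℕ} (ha : a ≤ 1) (hc : c ≤ 2)
    (h : single 2 4 p + single 3 3 p + 3 * a + 2 * c = 6 * s) :
    a = single 3 1 p ∧ c = single 2 1 p := by
  simp only [single_apply] at h ⊢
  split_ifs at h ⊢ <;> omega

lemma Nat.eq_three_and_eq_two_of_432_mul_eq_pow_six {e k m : ℕ} (he : Squarefree e) (hk : k ≠ 0)
    (hcf : ∀ p : ℕ, p.Prime → ¬ p ^ 3 ∣ k) (h : 432 * e ^ 3 * k ^ 2 = m ^ 6) :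
    e = 3 ∧ k = 2 := by
  have hval (p : ℕ) := valuations_of_sixth_power (he.natFactorization_le_one p)
    (Nat.factorization_le_two_of_cubefree hk hcf p) (s := m.factorization p) <| by
      simpa [Nat.factorization_432_mul_pow_three_mul_sq he.ne_zero hk, Nat.factorization_pow]
        using congrArg (·.factorization p) h
  refine ⟨Nat.eq_of_factorization_eq he.ne_zero three_ne_zero fun p => ?_,
    Nat.eq_of_factorization_eq hk two_ne_zero fun p => ?_⟩
  · rw [Nat.prime_three.factorization]; exact (hval p).1
  · rw [Nat.prime_two.factorization]; exact (hval p).2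

/-- For a squarefree integer `d` and a positive cubefree integer `k`, the integer
`-432·d³·k²` is a perfect sixth power if and only if `d = -3` and `k = 2`. -/
theorem sixth_power_iff (d : ℤ) (hd : Squarefree d) (k : ℕ) (hk : 0 < k)
    (hkcf : ∀ p : ℕ, p.Prime → ¬ p ^ 3 ∣ k) :
    (∃ b : ℤ, -432 * d ^ 3 * (k : ℤ) ^ 2 = b ^ 6) ↔ (d = -3 ∧ k = 2) := by
  constructor
  · rintro ⟨b, hb⟩
    obtain ⟨hd3, rfl⟩ := Nat.eq_three_and_eq_two_of_432_mul_eq_pow_six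
      (Int.squarefree_natAbs.mpr hd) hk.ne' hkcf (m := b.natAbs) <| by
        simpa [Int.natAbs_mul, Int.natAbs_pow] using congrArg Int.natAbs hb
    refine ⟨?_, rfl⟩
    rcases Int.natAbs_eq_iff.mp hd3 with rfl | rfl
    · have : 0 ≤ b ^ 6 := by positivity
      norm_num at hb; linarith
    · rfl
  · rintro ⟨rfl, rfl⟩
    exact ⟨6, by norm_num⟩
end
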